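/- If a ∈ [0,1], a ≠ 1/2, the fixed points of V_4 on S² are exactly e₁ = (1,0,0) and (0, (3−√5)/2, (−1+√5)/2). -/

import Mathlib

def V4 (a : ℝ) (p : ℝ × ℝ × ℝ) : ℝ × ℝ × ℝ :=
  (p.1^2 + 2*a*p.1*(1-p.1), p.2.2^2 + 2*(1-a)*p.1*(1-p.1), p.2.1^2 + 2*p.2.1*p.2.2)

def S2 : Set (ℝ × ℝ × ℝ) :=
  {p | 0 ≤ p.1 ∧ 0 ≤ p.2.1 ∧ 0 ≤ p.2.2 ∧ p.1 + p.2.1 + p.2.2 = 1}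

/-! On the simplex the first coordinate of `V4 a` decouples: `x ↦ x² + 2a·x(1 - x)` has fixed-point
equation `(2a - 1)·x(1 - x) = 0`, so for `a ≠ 1/2` a fixed point has `x = 0` or `x = 1`. If `x = 1`
the point is `e₁`. If `x = 0`, the second coordinate forces `y = z²`, and `y + z = 1` turns this into
`z² + z - 1 = 0`, whose only nonnegative root is `(√5 - 1)/2`. -/

open Real

lemma eq_zero_or_eq_one_of_sq_add_mul_eq_self {a x : ℝ} (ha : a ≠ 1 / 2)
    (h : x ^ 2 + 2 * a * x * (1 - x) = x) : x = 0 ∨ x = 1 := by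
  have hfactor : x * (1 - x) * (2 * a - 1) = 0 := by linear_combination h
  have ha₁ : 2 * a - 1 ≠ 0 := fun h => ha (by linarith)
  rcases mul_eq_zero.mp ((mul_eq_zero_iff_right ha₁).mp hfactor) with hx | hx
  · exact .inl hx
  · exact .inr (by linarith)

lemma sq_add_self_sub_one_eq_zero_iff {z : ℝ} (hz : 0 ≤ z) :
    z ^ 2 + z - 1 = 0 ↔ z = (-1 + √5) / 2 := by
  have hdiscrim : discrim (1 : ℝ) 1 (-1) = √5 * √5 := by
    rw [discrim, Real.mul_self_sqrt (by norm_num)]; norm_num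
  have hroots := quadratic_eq_zero_iff one_ne_zero hdiscrim z
  have hsqrt : 0 ≤ √5 := Real.sqrt_nonneg 5
  constructor
  · intro h
    rcases hroots.mp (by linear_combination h) with hz' | hz'
    · linarith
    · exfalso; linarith
  · intro h
    linear_combination hroots.mpr (.inl (by linarith))

lemma golden_point_mem_S2 : ((0 : ℝ), (3 - √5) / 2, (-1 + √5) / 2) ∈ S2 := by
  have h5 : √5 ^ 2 = 5 := Real.sq_sqrt (by norm_num)
  refine ⟨le_rfl, ?_, ?_, by ring⟩ <;> nlinarith [Real.sqrt_nonneg 5]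

lemma V4_golden_point (a : ℝ) :
    V4 a (0, (3 - √5) / 2, (-1 + √5) / 2) = (0, (3 - √5) / 2, (-1 + √5) / 2) := by
  have h5 : √5 ^ 2 = 5 := Real.sq_sqrt (by norm_num)
  simp only [V4, Prod.mk.injEq]
  exact ⟨by ring, by linear_combination h5 / 4, by linear_combination -h5 / 4⟩

theorem V4_fixed_points_general (a : ℝ) (ha' : a ≠ 1/2) :
    {p ∈ S2 | V4 a p = p} =
      {((1:ℝ),(0:ℝ),(0:ℝ)), ((0:ℝ), (3 - Real.sqrt 5)/2, (-1 + Real.sqrt 5)/2)} := by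
  ext ⟨x, y, z⟩
  simp only [Set.mem_ofPred_eq, Set.mem_insert_iff, Set.mem_singleton_iff]
  constructor
  · rintro ⟨⟨hx, hy, hz, hsum⟩, hfixed⟩
    simp only [V4, Prod.mk.injEq] at hfixed ⊢
    obtain ⟨h₁, h₂, -⟩ := hfixed
    rcases eq_zero_or_eq_one_of_sq_add_mul_eq_self ha' h₁ with rfl | rfl
    · have hz' := (sq_add_self_sub_one_eq_zero_iff hz).mp (by linear_combination h₂ + hsum)
      exact .inr ⟨rfl, by linarith, hz'⟩
    · exact .inl ⟨rfl, by linarith, by linarith⟩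
  · rintro (h | h) <;> rw [h]
    · exact ⟨⟨zero_le_one, le_rfl, le_rfl, by norm_num⟩, by simp [V4]⟩
    · exact ⟨golden_point_mem_S2, V4_golden_point a⟩

theorem V4_fixed_points (a : ℝ) (ha : a ∈ Set.Icc (0:ℝ) 1) (ha' : a ≠ 1/2) :
    {p ∈ S2 | V4 a p = p} =
      {((1:ℝ),(0:ℝ),(0:ℝ)), ((0:ℝ), (3 - Real.sqrt 5)/2, (-1 + Real.sqrt 5)/2)} :=
  V4_fixed_points_general a ha'
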